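/- Let d ≥ 3 and 1 ≤ r < n ≤ d + 1 with 2r + 1 < d. The fan Σ^d_{n,r} of the intermediate variety B^d_{n,r} has exactly n + C(n,r) + C(n,r+1) primitive collections. -/
import Mathlib

theorem stmt_14 (d n r : ℕ) (hd : 3 ≤ d) (hr : 1 ≤ r) (hrn : r < n)
    (hnd : n ≤ d + 1) (h : 2 * r + 1 < d) :
    (((Finset.Icc 1 n).image (fun i => ({Sum.inl i, Sum.inr i} : Finset (ℕ ⊕ ℕ)))) ∪
     (((Finset.Icc 1 n).powersetCard r).image
        (fun S => (Finset.Icc 1 (d + 1) \ S).image Sum.inl)) ∪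
     (((Finset.Icc 1 n).powersetCard (r + 1)).image
        (fun T => T.image Sum.inr))).card
      = n + n.choose r + n.choose (r + 1) := by
  have hAB : Disjoint
      ((Finset.Icc 1 n).image (fun i => ({Sum.inl i, Sum.inr i} : Finset (ℕ ⊕ ℕ))))
      (((Finset.Icc 1 n).powersetCard r).image
        (fun S => (Finset.Icc 1 (d + 1) \ S).image Sum.inl)) := by
    rw [Finset.disjoint_left]
    intro s hsA hsB
    obtain ⟨i, hi, rfl⟩ := Finset.mem_image.1 hsA
    obtain ⟨S, hS, hEq⟩ := Finset.mem_image.1 hsB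
    have : (Sum.inr i : ℕ ⊕ ℕ) ∈ (Finset.Icc 1 (d + 1) \ S).image Sum.inl := by
      rw [hEq]; simp
    simp at this
  have hABC : Disjoint
      (((Finset.Icc 1 n).image (fun i => ({Sum.inl i, Sum.inr i} : Finset (ℕ ⊕ ℕ)))) ∪
       (((Finset.Icc 1 n).powersetCard r).image
          (fun S => (Finset.Icc 1 (d + 1) \ S).image Sum.inl)))
      (((Finset.Icc 1 n).powersetCard (r + 1)).image (fun T => T.image Sum.inr)) := by
    rw [Finset.disjoint_left]
    intro s hsAB hsC
    obtain ⟨T, hT, hTeq⟩ := Finset.mem_image.1 hsC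
    rcases Finset.mem_union.1 hsAB with hsA | hsB
    · obtain ⟨i, hi, rfl⟩ := Finset.mem_image.1 hsA
      have : (Sum.inl i : ℕ ⊕ ℕ) ∈ T.image Sum.inr := by rw [hTeq]; simp
      simp at this
    · obtain ⟨S, hS, hEq⟩ := Finset.mem_image.1 hsB
      have hTne : T.Nonempty := by
        rw [← Finset.card_pos, (Finset.mem_powersetCard.1 hT).2]; omega
      obtain ⟨t, ht⟩ := hTne
      have h2 : (Sum.inr t : ℕ ⊕ ℕ) ∈ s := hTeq ▸ Finset.mem_image_of_mem _ ht
      rw [← hEq] at h2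
      simp at h2
  rw [Finset.card_union_of_disjoint hABC, Finset.card_union_of_disjoint hAB]
  congr 1
  congr 1
  · rw [Finset.card_image_of_injective, Nat.card_Icc]
    · omega
    · intro a b hab
      simp only at hab
      have : (Sum.inl a : ℕ ⊕ ℕ) ∈ ({Sum.inl b, Sum.inr b} : Finset (ℕ ⊕ ℕ)) := by
        rw [← hab]; simp
      simpa using this
  · rw [Finset.card_image_of_injOn, Finset.card_powersetCard, Nat.card_Icc]
    · norm_num
    · intro S1 h1 S2 h2 hEq
      have hsub : ∀ S ∈ (Finset.Icc 1 n).powersetCard r, S ⊆ Finset.Icc 1 (d + 1) := by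
        intro S hS
        exact (Finset.mem_powersetCard.1 hS).1.trans
          (Finset.Icc_subset_Icc_right (by omega))
      have hE : Finset.Icc 1 (d + 1) \ S1 = Finset.Icc 1 (d + 1) \ S2 :=
        Finset.image_injective Sum.inl_injective hEq
      have := congrArg (fun X => Finset.Icc 1 (d + 1) \ X) hE
      simpa [Finset.sdiff_sdiff_eq_self (hsub S1 h1),
        Finset.sdiff_sdiff_eq_self (hsub S2 h2)] using this
  · rw [Finset.card_image_of_injective _ (Finset.image_injective Sum.inr_injective),
      Finset.card_powersetCard, Nat.card_Icc]
    norm_num
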